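/- Let, for each N, (X_n, Y_n, U_n, V_n), n = 1,…,N, be real random variables such that all of them are mutually independent, each X_n, Y_n is Gaussian with mean 0 and variance ρ_A²/2, and each U_n, V_n is Gaussian with mean 0 and variance ρ_t²/2, for ρ_A, ρ_t > 0, and set Z_n = √(X_n² + Y_n²)·√(U_n² + V_n²). Then (1/N²) · E[ (∑_{n=1}^N Z_n)² ] tends to π² ρ_A² ρ_t² / 16 as N → ∞. -/

import Mathlib

/-!
If `a, b` are independent `N(0, v)`, then `√(a² + b²)` is Rayleigh distributed: in polar
coordinates on `ℂ` its mean is `√(2πv) / 2`, while its second moment is `2v`. Each path amplitude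
`Z_n = |h^A_n| |h^t_n|` is a product of two such independent variables, so
`E Z_n = (√(2π v_A) / 2) (√(2π v_t) / 2)` and `E Z_n² = (2 v_A) (2 v_t)`. The `Z_n` are pairwise
independent, hence `E (∑ Z_n)² = Var (∑ Z_n) + (∑ E Z_n)² = N (E Z² - (E Z)²) + N² (E Z)²`, and
after dividing by `N²` only `(E Z)² = π² ρ_A² ρ_t² / 16` survives.
-/

open MeasureTheory ProbabilityTheory Real Finset Filter
open scoped NNReal ENNReal

lemma integral_comp_sq_add_sq_eq_integral_complex (F : ℝ → ℝ) :
    ∫ p : ℝ × ℝ, F (p.1 ^ 2 + p.2 ^ 2) = ∫ z : ℂ, F (‖z‖ ^ 2) := by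
  rw [← Complex.volume_preserving_equiv_real_prod.symm.integral_comp
    Complex.measurableEquivRealProd.symm.measurableEmbedding]
  congr with p
  rw [Complex.sq_norm, Complex.normSq_apply]
  simp [sq]

lemma MeasureTheory.MemLp.sqrt_sq_add_sq {Ω : Type*} {_ : MeasurableSpace Ω} {P : Measure Ω}
    {a b : Ω → ℝ} (ha : MemLp a 2 P) (hb : MemLp b 2 P) :
    MemLp (fun ω ↦ √(a ω ^ 2 + b ω ^ 2)) 2 P := by
  have := ha.aestronglyMeasurable
  have := hb.aestronglyMeasurable
  rw [memLp_two_iff_integrable_sq (by fun_prop)]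
  simp_rw [sq_sqrt (add_nonneg (sq_nonneg _) (sq_nonneg _))]
  exact ha.integrable_sq.add hb.integrable_sq

lemma tendsto_one_div_sq_mul_linear_add_sq (a b : ℝ) :
    Tendsto (fun N : ℕ ↦ 1 / (N : ℝ) ^ 2 * (N * a + N ^ 2 * b)) atTop (nhds b) := by
  have h := ((tendsto_one_div_atTop_nhds_zero_nat).const_mul a).add_const b
  rw [mul_zero, zero_add] at h
  refine h.congr' ((eventually_ne_atTop 0).mono fun N hN ↦ ?_)
  field_simp

namespace ProbabilityTheory

section GaussianProduct

variable {v : ℝ≥0}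

lemma gaussianReal_prod_gaussianReal_eq_withDensity (hv : v ≠ 0) :
    (gaussianReal 0 v).prod (gaussianReal 0 v)
      = volume.withDensity fun p : ℝ × ℝ ↦ gaussianPDF 0 v p.1 * gaussianPDF 0 v p.2 := by
  rw [gaussianReal_of_var_ne_zero _ hv,
    prod_withDensity (measurable_gaussianPDF _ _) (measurable_gaussianPDF _ _),
    Measure.volume_eq_prod]

lemma gaussianPDFReal_mul_gaussianPDFReal (v : ℝ≥0) (x y : ℝ) :
    gaussianPDFReal 0 v x * gaussianPDFReal 0 v y
      = (2 * π * v)⁻¹ * rexp (-(2 * v : ℝ)⁻¹ * (x ^ 2 + y ^ 2)) := by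
  have hsq : (√(2 * π * v))⁻¹ * (√(2 * π * v))⁻¹ = (2 * π * v : ℝ)⁻¹ := by
    rw [← mul_inv, mul_self_sqrt (by positivity)]
  simp only [gaussianPDFReal, sub_zero]
  rw [mul_mul_mul_comm, hsq, ← exp_add]
  congr 2
  ring

lemma integral_gaussianReal_prod_comp_sq_add_sq (hv : v ≠ 0) (F : ℝ → ℝ) :
    ∫ p, F (p.1 ^ 2 + p.2 ^ 2) ∂(gaussianReal 0 v).prod (gaussianReal 0 v)
      = (2 * π * v)⁻¹ * ∫ z : ℂ, rexp (-(2 * v : ℝ)⁻¹ * ‖z‖ ^ 2) * F (‖z‖ ^ 2) := by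
  rw [gaussianReal_prod_gaussianReal_eq_withDensity hv,
    integral_withDensity_eq_integral_toReal_smul (by fun_prop)
      (.of_forall fun _ ↦ ENNReal.mul_lt_top gaussianPDF_lt_top gaussianPDF_lt_top),
    ← integral_const_mul, ← integral_comp_sq_add_sq_eq_integral_complex
      (fun s ↦ (2 * π * v)⁻¹ * (rexp (-(2 * v : ℝ)⁻¹ * s) * F s))]
  congr with p
  rw [ENNReal.toReal_mul, toReal_gaussianPDF, toReal_gaussianPDF,
    gaussianPDFReal_mul_gaussianPDFReal, smul_eq_mul, mul_assoc]

lemma integral_sqrt_sq_add_sq_gaussianReal_prod (v : ℝ≥0) :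
    ∫ p, √(p.1 ^ 2 + p.2 ^ 2) ∂(gaussianReal 0 v).prod (gaussianReal 0 v) = √(2 * π * v) / 2 := by
  rcases eq_or_ne v 0 with rfl | hv
  · simp [gaussianReal_zero_var, Measure.dirac_prod_dirac]
  have hpolar := Complex.integral_rpow_mul_exp_neg_mul_rpow (p := 2) (q := 1) one_le_two
    (by norm_num) (b := (2 * v : ℝ)⁻¹) (by positivity)
  have hexp : ((2 * v : ℝ)⁻¹) ^ (-((1 : ℝ) + 2) / 2) = 2 * v * √(2 * v) := by
    rw [inv_rpow (by positivity), ← rpow_neg (by positivity), sqrt_eq_rpow,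
      ← rpow_one_add' (by positivity) (by norm_num)]
    norm_num
  have hGamma : Gamma ((1 + 2) / 2) = √π / 2 := by
    rw [show ((1 : ℝ) + 2) / 2 = 1 / 2 + 1 by norm_num, Gamma_add_one (by norm_num),
      Gamma_one_half_eq]
    ring
  simp only [rpow_one, rpow_two, hexp, hGamma] at hpolar
  rw [integral_gaussianReal_prod_comp_sq_add_sq hv Real.sqrt]
  simp_rw [sqrt_sq (norm_nonneg _), mul_comm (rexp _), hpolar,
    show (2 * π * v : ℝ) = 2 * v * π by ring, sqrt_mul (by positivity : (0 : ℝ) ≤ 2 * v)]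
  field_simp

end GaussianProduct

lemma HasLaw.of_map_eq {Ω 𝓧 : Type*} {_ : MeasurableSpace Ω} {_ : MeasurableSpace 𝓧}
    {P : Measure Ω} {μ : Measure 𝓧} [IsProbabilityMeasure μ] {X : Ω → 𝓧} (h : P.map X = μ) :
    HasLaw X μ P :=
  ⟨.of_map_ne_zero (h ▸ IsProbabilityMeasure.ne_zero μ), h⟩

section RandomVariables

variable {Ω : Type*} {_ : MeasurableSpace Ω} {P : Measure Ω} {a b X Y : Ω → ℝ} {v : ℝ≥0}

lemma HasLaw.memLp_of_gaussianReal {m : ℝ} (ha : HasLaw a (gaussianReal m v) P) (p : ℝ≥0) :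
    MemLp a p P :=
  (memLp_map_measure_iff aestronglyMeasurable_id ha.aemeasurable).1
    (ha.map_eq ▸ memLp_id_gaussianReal p)

lemma HasLaw.integral_sq_of_gaussianReal (ha : HasLaw a (gaussianReal 0 v) P) :
    ∫ ω, a ω ^ 2 ∂P = v := by
  rw [← Function.comp_def (fun x : ℝ ↦ x ^ 2) a, ha.integral_comp (by fun_prop),
    ← variance_fun_id_gaussianReal (μ := 0),
    variance_of_integral_eq_zero aemeasurable_id' integral_id_gaussianReal]

lemma integral_sq_add_sq_of_gaussianReal (ha : HasLaw a (gaussianReal 0 v) P)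
    (hb : HasLaw b (gaussianReal 0 v) P) : ∫ ω, (a ω ^ 2 + b ω ^ 2) ∂P = 2 * v := by
  rw [integral_add (ha.memLp_of_gaussianReal 2).integrable_sq
    (hb.memLp_of_gaussianReal 2).integrable_sq, ha.integral_sq_of_gaussianReal,
    hb.integral_sq_of_gaussianReal, two_mul]

lemma IndepFun.integral_sqrt_sq_add_sq_of_gaussianReal [IsFiniteMeasure P]
    (ha : HasLaw a (gaussianReal 0 v) P) (hb : HasLaw b (gaussianReal 0 v) P) (hab : a ⟂ᵢ[P] b) :
    ∫ ω, √(a ω ^ 2 + b ω ^ 2) ∂P = √(2 * π * v) / 2 := by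
  rw [← integral_sqrt_sq_add_sq_gaussianReal_prod v, ← (hab.hasLaw_prod ha hb).integral_comp
    (f := fun p : ℝ × ℝ ↦ √(p.1 ^ 2 + p.2 ^ 2)) (by fun_prop)]
  rfl

lemma IndepFun.sq (h : X ⟂ᵢ[P] Y) : (fun ω ↦ X ω ^ 2) ⟂ᵢ[P] (fun ω ↦ Y ω ^ 2) :=
  h.comp (measurable_id.pow_const 2) (measurable_id.pow_const 2)

lemma IndepFun.memLp_two_mul (h : X ⟂ᵢ[P] Y) (hX : MemLp X 2 P) (hY : MemLp Y 2 P) :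
    MemLp (X * Y) 2 P := by
  rw [memLp_two_iff_integrable_sq (hX.aestronglyMeasurable.mul hY.aestronglyMeasurable)]
  simpa only [Pi.mul_apply, Pi.mul_def, mul_pow] using
    h.sq.integrable_mul hX.integrable_sq hY.integrable_sq

lemma IndepFun.integral_mul_sq (h : X ⟂ᵢ[P] Y) (hX : AEStronglyMeasurable X P)
    (hY : AEStronglyMeasurable Y P) :
    ∫ ω, (X ω * Y ω) ^ 2 ∂P = (∫ ω, X ω ^ 2 ∂P) * ∫ ω, Y ω ^ 2 ∂P := by
  simp_rw [mul_pow]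
  exact h.sq.integral_fun_mul_eq_mul_integral (hX.pow 2) (hY.pow 2)

end RandomVariables

/-- The amplitude `|h| |h'|` of a cascaded path, where `h = x 0 + x 1 i` and `h' = x 2 + x 3 i`. -/
noncomputable def pathGain (x : Fin 4 → ℝ) : ℝ := √(x 0 ^ 2 + x 1 ^ 2) * √(x 2 ^ 2 + x 3 ^ 2)

@[fun_prop]
lemma measurable_pathGain : Measurable pathGain := by
  unfold pathGain
  fun_prop

section PathGain

variable {Ω : Type*} {_ : MeasurableSpace Ω} {P : Measure Ω} {ξ : Fin 4 → Ω → ℝ} {v w : ℝ≥0}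

lemma iIndepFun.indepFun_sqrt_sq_add_sq (hξ : iIndepFun ξ P) (hm : ∀ j, AEMeasurable (ξ j) P) :
    (fun ω ↦ √(ξ 0 ω ^ 2 + ξ 1 ω ^ 2)) ⟂ᵢ[P] (fun ω ↦ √(ξ 2 ω ^ 2 + ξ 3 ω ^ 2)) :=
  (hξ.indepFun_prodMk_prodMk₀ hm 0 1 2 3 (by decide) (by decide) (by decide) (by decide)).comp
    (φ := fun p : ℝ × ℝ ↦ √(p.1 ^ 2 + p.2 ^ 2)) (ψ := fun p : ℝ × ℝ ↦ √(p.1 ^ 2 + p.2 ^ 2))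
    (by fun_prop) (by fun_prop)

lemma iIndepFun.memLp_pathGain (hξ : iIndepFun ξ P)
    (hlaw : ∀ j, HasLaw (ξ j) (gaussianReal 0 (![v, v, w, w] j)) P) :
    MemLp (fun ω ↦ pathGain (ξ · ω)) 2 P :=
  (hξ.indepFun_sqrt_sq_add_sq fun j ↦ (hlaw j).aemeasurable).memLp_two_mul
    (((hlaw 0).memLp_of_gaussianReal 2).sqrt_sq_add_sq ((hlaw 1).memLp_of_gaussianReal 2))
    (((hlaw 2).memLp_of_gaussianReal 2).sqrt_sq_add_sq ((hlaw 3).memLp_of_gaussianReal 2))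

lemma iIndepFun.integral_pathGain [IsFiniteMeasure P] (hξ : iIndepFun ξ P)
    (hlaw : ∀ j, HasLaw (ξ j) (gaussianReal 0 (![v, v, w, w] j)) P) :
    ∫ ω, pathGain (ξ · ω) ∂P = √(2 * π * v) / 2 * (√(2 * π * w) / 2) := by
  have hm j := (hlaw j).aemeasurable
  rw [← (hξ.indepFun (by decide : (0 : Fin 4) ≠ 1)).integral_sqrt_sq_add_sq_of_gaussianReal
      (v := v) (hlaw 0) (hlaw 1),
    ← (hξ.indepFun (by decide : (2 : Fin 4) ≠ 3)).integral_sqrt_sq_add_sq_of_gaussianReal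
      (v := w) (hlaw 2) (hlaw 3)]
  exact (hξ.indepFun_sqrt_sq_add_sq hm).integral_fun_mul_eq_mul_integral (by fun_prop) (by fun_prop)

lemma iIndepFun.integral_pathGain_sq (hξ : iIndepFun ξ P)
    (hlaw : ∀ j, HasLaw (ξ j) (gaussianReal 0 (![v, v, w, w] j)) P) :
    ∫ ω, pathGain (ξ · ω) ^ 2 ∂P = 2 * v * (2 * w) := by
  have hm j := (hlaw j).aemeasurable
  rw [← integral_sq_add_sq_of_gaussianReal (v := v) (hlaw 0) (hlaw 1),
    ← integral_sq_add_sq_of_gaussianReal (v := w) (hlaw 2) (hlaw 3)]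
  simp_rw [pathGain, (hξ.indepFun_sqrt_sq_add_sq hm).integral_mul_sq (by fun_prop) (by fun_prop),
    sq_sqrt (add_nonneg (sq_nonneg _) (sq_nonneg _))]

end PathGain

section Sums

variable {Ω : Type*} {_ : MeasurableSpace Ω} {μ : Measure Ω}

lemma iIndepFun.indepFun_curry₀ {ι κ β : Type*} [Fintype κ] [MeasurableSpace β]
    {f : ι × κ → Ω → β} (h : iIndepFun f μ) (hf : ∀ p, AEMeasurable (f p) μ) {i i' : ι}
    (hii' : i ≠ i') : (fun ω j ↦ f (i, j) ω) ⟂ᵢ[μ] (fun ω j ↦ f (i', j) ω) := by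
  have hdisj : Disjoint ({i} ×ˢ univ : Finset (ι × κ)) ({i'} ×ˢ univ) :=
    disjoint_product.2 (.inl (disjoint_singleton.2 hii'))
  exact (h.indepFun_finset₀ _ _ hdisj hf).comp
    (measurable_pi_lambda _ fun j ↦ measurable_pi_apply ⟨(i, j), by simp⟩)
    (measurable_pi_lambda _ fun j ↦ measurable_pi_apply ⟨(i', j), by simp⟩)

lemma integral_sq_sum_of_pairwise_indepFun [IsProbabilityMeasure μ] {ι : Type*} {W : ι → Ω → ℝ}
    {s : Finset ι} {m q : ℝ} (hW : ∀ i ∈ s, MemLp (W i) 2 μ)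
    (hind : Set.Pairwise s fun i j ↦ W i ⟂ᵢ[μ] W j) (hm : ∀ i ∈ s, ∫ ω, W i ω ∂μ = m)
    (hq : ∀ i ∈ s, ∫ ω, W i ω ^ 2 ∂μ = q) :
    ∫ ω, (∑ i ∈ s, W i ω) ^ 2 ∂μ = #s * (q - m ^ 2) + #s ^ 2 * m ^ 2 := by
  have hvar : Var[∑ i ∈ s, W i; μ] = #s * (q - m ^ 2) := by
    have hvar_i : ∀ i ∈ s, Var[W i; μ] = q - m ^ 2 := fun i hi ↦ by
      rw [variance_eq_sub (hW i hi), ← hm i hi, ← hq i hi]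
      rfl
    rw [IndepFun.variance_sum hW hind, sum_congr rfl hvar_i, sum_const, nsmul_eq_mul]
  have hmean : ∫ ω, ∑ i ∈ s, W i ω ∂μ = #s * m := by
    rw [integral_finsetSum s fun i hi ↦ (hW i hi).integrable one_le_two, sum_congr rfl hm,
      sum_const, nsmul_eq_mul]
  rw [variance_eq_sub (memLp_finsetSum' s hW)] at hvar
  simp only [Pi.pow_apply, Finset.sum_apply, hmean] at hvar
  linear_combination hvar

end Sums

end ProbabilityTheory

theorem average_power_max_snr_limit_general
    {Ω : Type*} [MeasurableSpace Ω] (P : Measure Ω) [IsProbabilityMeasure P]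
    (X Y U V : (N : ℕ) → Fin N → Ω → ℝ) (ρA ρt : ℝ)
    (hindep : ∀ N : ℕ, iIndepFun
      (fun (p : Fin N × Fin 4) => ![X N p.1, Y N p.1, U N p.1, V N p.1] p.2) P)
    (hX : ∀ N n, Measure.map (X N n) P = gaussianReal 0 (Real.toNNReal (ρA ^ 2 / 2)))
    (hY : ∀ N n, Measure.map (Y N n) P = gaussianReal 0 (Real.toNNReal (ρA ^ 2 / 2)))
    (hU : ∀ N n, Measure.map (U N n) P = gaussianReal 0 (Real.toNNReal (ρt ^ 2 / 2)))
    (hV : ∀ N n, Measure.map (V N n) P = gaussianReal 0 (Real.toNNReal (ρt ^ 2 / 2)))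
    (Z : (N : ℕ) → Fin N → Ω → ℝ)
    (hZ : ∀ N n ω, Z N n ω
      = Real.sqrt (X N n ω ^ 2 + Y N n ω ^ 2) * Real.sqrt (U N n ω ^ 2 + V N n ω ^ 2)) :
    Tendsto (fun N : ℕ => (1 / (N : ℝ) ^ 2) * ∫ ω, (∑ n, Z N n ω) ^ 2 ∂P)
      atTop (nhds (π ^ 2 * ρA ^ 2 * ρt ^ 2 / 16)) := by
  set vA := (ρA ^ 2 / 2).toNNReal
  set vt := (ρt ^ 2 / 2).toNNReal
  have hlaw N n : ∀ j, HasLaw (![X N n, Y N n, U N n, V N n] j)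
      (gaussianReal 0 (![vA, vA, vt, vt] j)) P := by
    intro j
    fin_cases j
    exacts [.of_map_eq (hX N n), .of_map_eq (hY N n), .of_map_eq (hU N n), .of_map_eq (hV N n)]
  have hξ N (n : Fin N) : iIndepFun ![X N n, Y N n, U N n, V N n] P :=
    ((hindep N).precomp (Prod.mk_right_injective n) :)
  obtain rfl : Z = fun N n ω ↦ pathGain (![X N n, Y N n, U N n, V N n] · ω) := by
    ext N n ω
    simp [hZ, pathGain]
  set c := √(2 * π * vA) / 2 * (√(2 * π * vt) / 2)
  have hc : c ^ 2 = π ^ 2 * ρA ^ 2 * ρt ^ 2 / 16 := by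
    rw [mul_pow, div_pow, div_pow, sq_sqrt (by positivity), sq_sqrt (by positivity),
      Real.coe_toNNReal _ (by positivity), Real.coe_toNNReal _ (by positivity)]
    ring
  have hpower N : ∫ ω, (∑ n, pathGain (![X N n, Y N n, U N n, V N n] · ω)) ^ 2 ∂P
      = N * (2 * vA * (2 * vt) - c ^ 2) + N ^ 2 * c ^ 2 := by
    simpa only [card_univ, Fintype.card_fin] using integral_sq_sum_of_pairwise_indepFun
      (s := univ) (fun n _ ↦ (hξ N n).memLp_pathGain (hlaw N n))
      (fun n _ m _ hnm ↦ ((hindep N).indepFun_curry₀ (fun p ↦ (hlaw N p.1 p.2).aemeasurable)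
        hnm).comp measurable_pathGain measurable_pathGain)
      (fun n _ ↦ (hξ N n).integral_pathGain (hlaw N n))
      (fun n _ ↦ (hξ N n).integral_pathGain_sq (hlaw N n))
  simp_rw [hpower, ← hc]
  exact tendsto_one_div_sq_mul_linear_add_sq _ _

/-- Asymptotic average received power under max-SNR phase shifts: with, for each `N`, `4N`
mutually independent Gaussians as described and `Z N n = √(X² + Y²)·√(U² + V²)`,
`(1/N²) · E[(∑ n, Z N n)²] → π² ρA² ρt² / 16` as `N → ∞`. -/
theorem average_power_max_snr_limit
    {Ω : Type*} [MeasurableSpace Ω] (P : Measure Ω) [IsProbabilityMeasure P]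
    (X Y U V : (N : ℕ) → Fin N → Ω → ℝ) (ρA ρt : ℝ) (hρA : 0 < ρA) (hρt : 0 < ρt)
    (hindep : ∀ N : ℕ, iIndepFun
      (fun (p : Fin N × Fin 4) => ![X N p.1, Y N p.1, U N p.1, V N p.1] p.2) P)
    (hX : ∀ N n, Measure.map (X N n) P = gaussianReal 0 (Real.toNNReal (ρA ^ 2 / 2)))
    (hY : ∀ N n, Measure.map (Y N n) P = gaussianReal 0 (Real.toNNReal (ρA ^ 2 / 2)))
    (hU : ∀ N n, Measure.map (U N n) P = gaussianReal 0 (Real.toNNReal (ρt ^ 2 / 2)))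
    (hV : ∀ N n, Measure.map (V N n) P = gaussianReal 0 (Real.toNNReal (ρt ^ 2 / 2)))
    (Z : (N : ℕ) → Fin N → Ω → ℝ)
    (hZ : ∀ N n ω, Z N n ω
      = Real.sqrt (X N n ω ^ 2 + Y N n ω ^ 2) * Real.sqrt (U N n ω ^ 2 + V N n ω ^ 2)) :
    Tendsto (fun N : ℕ => (1 / (N : ℝ) ^ 2) * ∫ ω, (∑ n, Z N n ω) ^ 2 ∂P)
      atTop (nhds (π ^ 2 * ρA ^ 2 * ρt ^ 2 / 16)) :=
  average_power_max_snr_limit_general P X Y U V ρA ρt hindep hX hY hU hV Z hZ
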